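/- arXiv:2112.04007 — 6 statements merged into one kernel-verified Lean document; each statement's English description precedes it below -/
import Mathlib

section
/- Let $T$ be a finite set of cardinality $d$, and for $1 \le k \le d$ let $\pi^k = \sum_{S \subseteq T, |S| = k} \prod_{x \in S} x$ be the $k$-th elementary symmetric polynomial in variables indexed by $T$. In the quotient of the polynomial ring by the ideal generated by $x^2 - x$ for all variables $x$, for all integers $1 \le i \le j \le d$ it holds that $\pi^i \pi^j = \sum_{r=0}^{\min\{i, d-j\}} \binom{i}{r}\binom{j+r}{i} \pi^{j+r}$. -/
open MvPolynomial

open Finset in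
lemma aux_count_pairs (d i j r : ℕ) (hri : r ≤ i) (hij : i ≤ j) (C : Finset (Fin d))
    (hC : C.card = j + r) :
    ((powersetCard i (univ : Finset (Fin d)) ×ˢ powersetCard j (univ : Finset (Fin d))).filter
      (fun p => p.1 ∪ p.2 = C)).card = i.choose r * (j + r).choose i := by
  classical
  have hmaps : ∀ p ∈ (powersetCard i (univ : Finset (Fin d)) ×ˢ
      powersetCard j (univ : Finset (Fin d))).filter (fun p => p.1 ∪ p.2 = C),
      p.2 ∈ powersetCard j C := by
    intro p hp
    simp only [Finset.mem_filter, Finset.mem_product, mem_powersetCard] at hp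
    obtain ⟨⟨⟨hA, hAcard⟩, ⟨hB, hBcard⟩⟩, hU⟩ := hp
    rw [mem_powersetCard]
    exact ⟨hU ▸ Finset.subset_union_right, hBcard⟩
  rw [Finset.card_eq_sum_card_fiberwise hmaps]
  have hinner : ∀ B ∈ powersetCard j C,
      ((Finset.filter (fun p => p.1 ∪ p.2 = C)
        (powersetCard i (univ : Finset (Fin d)) ×ˢ powersetCard j (univ : Finset (Fin d)))).filter
          (fun p => p.2 = B)).card = j.choose (i - r) := by
    intro B hB
    rw [mem_powersetCard] at hB
    obtain ⟨hBC, hBcard⟩ := hB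
    have hCB : (C \ B).card = r := by
      rw [card_sdiff_of_subset hBC, hC, hBcard]; omega
    have hcard : ((powersetCard (i - r) B)).card = j.choose (i - r) := by
      rw [card_powersetCard, hBcard]
    rw [← hcard]
    apply Finset.card_nbij' (fun p => p.1 ∩ B) (fun K => ((C \ B) ∪ K, B))
    · -- maps to
      intro p hp
      simp only [Finset.mem_coe, mem_filter, mem_product, mem_powersetCard] at hp
      obtain ⟨⟨⟨⟨hA, hAcard⟩, hB2⟩, hU⟩, hp2⟩ := hp
      rw [Finset.mem_coe, mem_powersetCard]
      refine ⟨Finset.inter_subset_right, ?_⟩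
      have h1 : p.1 \ B = C \ B := by
        rw [← hU, hp2, Finset.union_sdiff_right]
      have h2 := Finset.card_inter_add_card_sdiff p.1 B
      rw [h1, hCB, hAcard] at h2
      exact (by omega : (p.1 ∩ B).card = i - r)
    · -- inverse maps to
      intro K hK
      rw [Finset.mem_coe, mem_powersetCard] at hK
      obtain ⟨hKB, hKcard⟩ := hK
      have hdisj : Disjoint (C \ B) K := (Finset.sdiff_disjoint).mono_right hKB
      simp only [Finset.mem_coe, mem_filter, mem_product, mem_powersetCard]
      refine ⟨⟨⟨⟨Finset.subset_univ _, ?_⟩, ⟨Finset.subset_univ _, hBcard⟩⟩, ?_⟩, trivial⟩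
      · rw [Finset.card_union_of_disjoint hdisj, hCB, hKcard]
        omega
      · rw [Finset.union_assoc, Finset.union_eq_right.2 hKB,
          Finset.sdiff_union_of_subset hBC]
    · -- left inverse
      intro p hp
      simp only [Finset.mem_coe, mem_filter, mem_product, mem_powersetCard] at hp
      obtain ⟨⟨⟨⟨hA, hAcard⟩, hB2⟩, hU⟩, hp2⟩ := hp
      have h1 : p.1 \ B = C \ B := by
        rw [← hU, hp2, Finset.union_sdiff_right]
      have h3 : (C \ B) ∪ p.1 ∩ B = p.1 := by
        rw [← h1, Finset.sdiff_union_inter]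
      rw [Prod.ext_iff]
      exact ⟨h3, hp2.symm⟩
    · -- right inverse
      intro K hK
      rw [Finset.mem_coe, mem_powersetCard] at hK
      obtain ⟨hKB, hKcard⟩ := hK
      simp only []
      rw [Finset.union_inter_distrib_right, Finset.sdiff_inter_self,
        Finset.inter_eq_left.2 hKB, Finset.empty_union]
  rw [Finset.sum_congr rfl hinner, Finset.sum_const, Finset.card_powersetCard, hC,
    smul_eq_mul]
  have key : (j + r).choose i * i.choose r = (j + r).choose r * j.choose (i - r) := by
    have h := Nat.choose_mul (n := j + r) (k := i) (s := r) hri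
    rwa [Nat.add_sub_cancel] at h
  calc (j + r).choose j * j.choose (i - r)
      = (j + r).choose r * j.choose (i - r) := by rw [Nat.choose_symm_add]
    _ = (j + r).choose i * i.choose r := key.symm
    _ = i.choose r * (j + r).choose i := mul_comm _ _

theorem esymm_mul_esymm_mod_boolean (d : ℕ)
    (I : Ideal (MvPolynomial (Fin d) ℚ))
    (hI : I = Ideal.span {p | ∃ v : Fin d, p = X v ^ 2 - X v})
    (i j : ℕ) (hi : 1 ≤ i) (hij : i ≤ j) (hjd : j ≤ d) :
    Ideal.Quotient.mk I (esymm (Fin d) ℚ i * esymm (Fin d) ℚ j) =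
      Ideal.Quotient.mk I
        (∑ r ∈ Finset.range (min i (d - j) + 1),
          (i.choose r * (j + r).choose i : MvPolynomial (Fin d) ℚ) *
            esymm (Fin d) ℚ (j + r)) := by
  classical
  set q := Ideal.Quotient.mk I with hq
  -- idempotence of variables in the quotient
  have hX : ∀ v : Fin d, q (X v) * q (X v) = q (X v) := by
    intro v
    have hmem : (X v ^ 2 - X v : MvPolynomial (Fin d) ℚ) ∈ I := by
      rw [hI]; exact Ideal.subset_span ⟨v, rfl⟩
    have h0 : q (X v ^ 2 - X v) = 0 := Ideal.Quotient.eq_zero_iff_mem.2 hmem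
    rw [map_sub, sub_eq_zero, map_pow, sq] at h0
    exact h0
  -- absorbing a subproduct
  have hprod : ∀ S T : Finset (Fin d), S ⊆ T →
      q (∏ v ∈ T, X v) * q (∏ v ∈ S, X v) = q (∏ v ∈ T, X v) := by
    intro S T hST
    rw [← Finset.prod_sdiff hST]
    simp only [map_mul, map_prod]
    rw [mul_assoc, ← Finset.prod_mul_distrib]
    congr 1
    exact Finset.prod_congr rfl (fun v _ => hX v)
  have hunion : ∀ A B : Finset (Fin d),
      q ((∏ v ∈ A, X v) * ∏ v ∈ B, X v) = q (∏ v ∈ A ∪ B, X v) := by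
    intro A B
    have h : (∏ v ∈ A ∪ B, (X v : MvPolynomial (Fin d) ℚ)) * ∏ v ∈ A ∩ B, X v =
        (∏ v ∈ A, X v) * ∏ v ∈ B, X v := Finset.prod_union_inter
    calc q ((∏ v ∈ A, X v) * ∏ v ∈ B, X v)
        = q ((∏ v ∈ A ∪ B, X v) * ∏ v ∈ A ∩ B, X v) := by rw [h]
      _ = q (∏ v ∈ A ∪ B, X v) := by
          rw [map_mul]
          exact hprod _ _ (Finset.inter_subset_union)
  set m := min i (d - j) with hm
  -- LHS as a sum over pairs
  have lhs_eq : q (esymm (Fin d) ℚ i * esymm (Fin d) ℚ j) =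
      ∑ p ∈ Finset.powersetCard i (Finset.univ : Finset (Fin d)) ×ˢ
          Finset.powersetCard j (Finset.univ : Finset (Fin d)),
        q (∏ v ∈ p.1 ∪ p.2, X v) := by
    rw [esymm, esymm, Finset.sum_mul_sum, map_sum]
    rw [Finset.sum_product]
    simp only [map_sum]
    exact Finset.sum_congr rfl fun A _ => Finset.sum_congr rfl fun B _ => hunion A B
  -- fiberwise decomposition
  set D : Finset (Finset (Fin d)) :=
    (Finset.range (m + 1)).biUnion (fun r => Finset.powersetCard (j + r) Finset.univ) with hD
  have hmaps : ∀ p ∈ Finset.powersetCard i (Finset.univ : Finset (Fin d)) ×ˢ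
      Finset.powersetCard j (Finset.univ : Finset (Fin d)), p.1 ∪ p.2 ∈ D := by
    intro p hp
    simp only [Finset.mem_product, Finset.mem_powersetCard] at hp
    obtain ⟨⟨_, hAcard⟩, ⟨_, hBcard⟩⟩ := hp
    have h1 : j ≤ (p.1 ∪ p.2).card := hBcard ▸ Finset.card_le_card Finset.subset_union_right
    have h2 : (p.1 ∪ p.2).card ≤ i + j := by
      have := Finset.card_union_le p.1 p.2
      omega
    have h3 : (p.1 ∪ p.2).card ≤ d := by
      have := Finset.card_le_card (Finset.subset_univ (p.1 ∪ p.2))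
      simpa using this
    rw [hD, Finset.mem_biUnion]
    refine ⟨(p.1 ∪ p.2).card - j, ?_, ?_⟩
    · rw [Finset.mem_range]; omega
    · rw [Finset.mem_powersetCard]
      exact ⟨Finset.subset_univ _, by omega⟩
  rw [lhs_eq, ← Finset.sum_fiberwise_of_maps_to hmaps]
  have hdisj : ∀ r₁ ∈ Finset.range (m + 1), ∀ r₂ ∈ Finset.range (m + 1), r₁ ≠ r₂ →
      Disjoint (Finset.powersetCard (j + r₁) (Finset.univ : Finset (Fin d)))
        (Finset.powersetCard (j + r₂) Finset.univ) := by
    intro r₁ _ r₂ _ hne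
    rw [Finset.disjoint_left]
    intro C h1 h2
    rw [Finset.mem_powersetCard] at h1 h2
    omega
  rw [hD, Finset.sum_biUnion]
  swap
  · exact fun r₁ h₁ r₂ h₂ hne => hdisj r₁ h₁ r₂ h₂ hne
  rw [map_sum]
  refine Finset.sum_congr rfl fun r hr => ?_
  rw [Finset.mem_range] at hr
  have hri : r ≤ i := by omega
  have hcount : ∀ C ∈ Finset.powersetCard (j + r) (Finset.univ : Finset (Fin d)),
      (Finset.filter (fun p => p.1 ∪ p.2 = C)
        (Finset.powersetCard i (Finset.univ : Finset (Fin d)) ×ˢ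
          Finset.powersetCard j Finset.univ)).card = i.choose r * (j + r).choose i := by
    intro C hC
    rw [Finset.mem_powersetCard] at hC
    exact aux_count_pairs d i j r hri hij C hC.2
  calc ∑ C ∈ Finset.powersetCard (j + r) (Finset.univ : Finset (Fin d)),
        ∑ p ∈ Finset.filter (fun p => p.1 ∪ p.2 = C)
          (Finset.powersetCard i (Finset.univ : Finset (Fin d)) ×ˢ
            Finset.powersetCard j Finset.univ), q (∏ v ∈ p.1 ∪ p.2, X v)
      = ∑ C ∈ Finset.powersetCard (j + r) (Finset.univ : Finset (Fin d)),
          (i.choose r * (j + r).choose i) • q (∏ v ∈ C, X v) := by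
        refine Finset.sum_congr rfl fun C hC => ?_
        rw [← hcount C hC, ← Finset.sum_const]
        refine Finset.sum_congr rfl fun p hp => ?_
        rw [Finset.mem_filter] at hp
        rw [hp.2]
    _ = q ((i.choose r * (j + r).choose i : MvPolynomial (Fin d) ℚ) *
          esymm (Fin d) ℚ (j + r)) := by
        rw [map_mul, esymm, map_sum, Finset.mul_sum]
        refine Finset.sum_congr rfl fun C _ => ?_
        rw [nsmul_eq_mul]
        congr 1
        push_cast
        rw [map_mul, map_natCast, map_natCast]
end

section
/- For integers $1 < i \le j$ with $i \le j$, and $d \ge i + j$, the sum $\sum_{k=j}^{i+j} \frac{(-1)^k \, d \, \binom{i}{k-j}\binom{k}{i}}{(k-1)k} = 0$. -/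
open Finset

lemma inner_alt (i b : ℕ) (hb : b < i) :
    ∑ s ∈ range (i + 1), ((-1 : ℚ) ^ s * (i.choose s) * (s.choose b)) = 0 := by
  have hsub : Finset.Ico b (i + 1) ⊆ range (i + 1) := by
    intro x hx; simp only [mem_Ico] at hx; simp [hx.2]
  rw [← Finset.sum_subset hsub (by
    intro x hx hx'
    simp only [mem_range] at hx
    simp only [mem_Ico, not_and, not_le] at hx'
    have : x < b := by omega
    simp [Nat.choose_eq_zero_of_lt this])]
  rw [Finset.sum_Ico_eq_sum_range]
  have hib : i + 1 - b = (i - b) + 1 := by omega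
  rw [hib]
  have hterm : ∀ t ∈ range ((i - b) + 1),
      ((-1 : ℚ) ^ (b + t) * (i.choose (b + t)) * ((b + t).choose b))
        = ((-1 : ℚ) ^ b * (i.choose b)) * ((-1 : ℚ) ^ t * ((i - b).choose t)) := by
    intro t ht
    simp only [mem_range] at ht
    have h1 : b + t ≤ i := by omega
    have h2 : b ≤ b + t := Nat.le_add_right b t
    have := Nat.choose_mul (n := i) h2
    rw [Nat.add_sub_cancel_left] at this
    have hcast : ((i.choose (b + t)) : ℚ) * ((b + t).choose b)
        = (i.choose b) * ((i - b).choose t) := by exact_mod_cast congrArg (Nat.cast : ℕ → ℚ) this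
    rw [pow_add]
    linear_combination ((-1 : ℚ) ^ b * (-1 : ℚ) ^ t) * hcast
  rw [Finset.sum_congr rfl hterm, ← Finset.mul_sum]
  have halt : (∑ t ∈ range ((i - b) + 1), ((-1 : ℚ) ^ t * ((i - b).choose t))) = 0 := by
    have h0 : i - b ≠ 0 := by omega
    have := Int.alternating_sum_range_choose_of_ne h0
    exact_mod_cast congrArg (Int.cast : ℤ → ℚ) this
  rw [halt, mul_zero]

lemma key_sum (i j : ℕ) (hi : 2 ≤ i) (hij : i ≤ j) :
    ∑ s ∈ range (i + 1), ((-1 : ℚ) ^ s * (i.choose s) * ((j - 2 + s).choose (i - 2))) = 0 := by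
  have hterm : ∀ s ∈ range (i + 1),
      ((-1 : ℚ) ^ s * (i.choose s) * ((j - 2 + s).choose (i - 2)))
        = ∑ ab ∈ Finset.HasAntidiagonal.antidiagonal (i - 2),
            (((j - 2).choose ab.1 : ℚ)) * ((-1 : ℚ) ^ s * (i.choose s) * (s.choose ab.2)) := by
    intro s _
    rw [Nat.add_choose_eq (j - 2) s (i - 2)]
    push_cast
    rw [Finset.mul_sum]
    apply Finset.sum_congr rfl
    intro ab _
    ring
  rw [Finset.sum_congr rfl hterm, Finset.sum_comm]
  apply Finset.sum_eq_zero
  intro ab hab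
  rw [Finset.HasAntidiagonal.mem_antidiagonal] at hab
  have hb : ab.2 < i := by omega
  rw [← Finset.mul_sum, inner_alt i ab.2 hb, mul_zero]

lemma choose_desc (k i : ℕ) (h2 : 2 ≤ i) (hik : i ≤ k) :
    (k.choose i : ℚ) * (i * ((i : ℚ) - 1)) = ((k - 2).choose (i - 2) : ℚ) * (k * ((k : ℚ) - 1)) := by
  obtain ⟨i', rfl⟩ : ∃ i', i = i' + 2 := ⟨i - 2, by omega⟩
  obtain ⟨k', rfl⟩ : ∃ k', k = k' + 2 := ⟨k - 2, by omega⟩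
  simp only [Nat.add_sub_cancel]
  have h1 := Nat.add_one_mul_choose_eq (k' + 1) (i' + 1)
  have h2 := Nat.add_one_mul_choose_eq k' i'
  have h1c : ((k' : ℚ) + 2) * ((k' + 1).choose (i' + 1)) = ((k' + 2).choose (i' + 2) : ℚ) * (i' + 2) := by
    exact_mod_cast congrArg (Nat.cast : ℕ → ℚ) h1
  have h2c : ((k' : ℚ) + 1) * (k'.choose i') = ((k' + 1).choose (i' + 1) : ℚ) * (i' + 1) := by
    exact_mod_cast congrArg (Nat.cast : ℕ → ℚ) h2
  push_cast
  linear_combination (-(i' : ℚ) - 1) * h1c + (-(k' : ℚ) - 2) * h2c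

theorem gosper_sum_eq_zero (i j d : ℕ) (hi : 1 < i) (hij : i ≤ j) (hd : i + j ≤ d) :
    ∑ k ∈ Finset.Icc j (i + j),
        ((-1 : ℚ) ^ k * d * (i.choose (k - j)) * (k.choose i)) / ((k - 1) * k) = 0 := by
  have hi2 : 2 ≤ i := hi
  have hj2 : 2 ≤ j := le_trans hi2 hij
  have hterm : ∀ k ∈ Finset.Icc j (i + j),
      ((-1 : ℚ) ^ k * d * (i.choose (k - j)) * (k.choose i)) / ((k - 1) * k)
        = ((d : ℚ) / (i * (i - 1))) *
            ((-1 : ℚ) ^ k * (i.choose (k - j)) * ((k - 2).choose (i - 2))) := by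
    intro k hk
    simp only [mem_Icc] at hk
    have hik : i ≤ k := le_trans hij hk.1
    have hk2 : 2 ≤ k := le_trans hi2 hik
    have hcast := choose_desc k i hi2 hik
    have hk1 : ((k : ℚ) - 1) ≠ 0 := by
      have : (2 : ℚ) ≤ (k : ℚ) := by exact_mod_cast hk2
      linarith
    have hk0 : (k : ℚ) ≠ 0 := by positivity
    have hi1 : ((i : ℚ) - 1) ≠ 0 := by
      have : (2 : ℚ) ≤ (i : ℚ) := by exact_mod_cast hi2
      linarith
    have hi0 : (i : ℚ) ≠ 0 := by positivity
    field_simp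
    linear_combination ((d : ℚ) * (i.choose (k - j))) * hcast
  rw [Finset.sum_congr rfl hterm, ← Finset.mul_sum]
  have hzero : ∑ k ∈ Finset.Icc j (i + j),
      ((-1 : ℚ) ^ k * (i.choose (k - j)) * ((k - 2).choose (i - 2))) = 0 := by
    rw [← Finset.Ico_add_one_right_eq_Icc, Finset.sum_Ico_eq_sum_range]
    have hrange : i + j + 1 - j = i + 1 := by omega
    rw [hrange]
    have hterm2 : ∀ s ∈ range (i + 1),
        ((-1 : ℚ) ^ (j + s) * (i.choose (j + s - j)) * ((j + s - 2).choose (i - 2)))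
          = ((-1 : ℚ) ^ j) * ((-1 : ℚ) ^ s * (i.choose s) * ((j - 2 + s).choose (i - 2))) := by
      intro s _
      have e1 : j + s - j = s := by omega
      have e2 : j + s - 2 = j - 2 + s := by omega
      rw [e1, e2, pow_add]
      ring
    rw [Finset.sum_congr rfl hterm2, ← Finset.mul_sum, key_sum i j hi2 hij, mul_zero]
  rw [hzero, mul_zero]
end

section
/- Let $R = \mathbb{R}[x_1, x_2, x_3]/(x_i^2 - x_i)$ with $\rho^1, \rho^2$ the first and second elementary symmetric polynomials, and let $(\alpha,\beta) = (-\sqrt{2}+3, \sqrt{2}-2)$. Let $x_4$ be a fourth Boolean variable (with $x_4^2 = x_4$). Then $x_4^2 + (-\alpha + \alpha\rho^1 + \beta\rho^2)^2 = (x_1 + x_2 + x_3 + x_4 - 1) + (\alpha^2+1)(1 - \rho^1 + \rho^2 - \rho^3)$ in $\mathbb{R}[x_1,\dots,x_4]/(x_i^2 - x_i)$, where $\rho^3 = x_1x_2x_3$. -/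
open MvPolynomial

set_option maxHeartbeats 2000000 in
theorem certificate_verification_2121 (I : Ideal (MvPolynomial (Fin 4) ℝ))
    (hI : I = Ideal.span {p | ∃ v : Fin 4, p = X v ^ 2 - X v})
    (α β : ℝ) (hα : α = -Real.sqrt 2 + 3) (hβ : β = Real.sqrt 2 - 2)
    (ρ1 ρ2 ρ3 : MvPolynomial (Fin 4) ℝ)
    (hρ1 : ρ1 = X 0 + X 1 + X 2)
    (hρ2 : ρ2 = X 0 * X 1 + X 0 * X 2 + X 1 * X 2)
    (hρ3 : ρ3 = X 0 * X 1 * X 2) :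
    Ideal.Quotient.mk I ((X 3) ^ 2 + (-(C α) + C α * ρ1 + C β * ρ2) ^ 2) =
      Ideal.Quotient.mk I
        ((X 0 + X 1 + X 2 + X 3 - 1) + C (α ^ 2 + 1) * (1 - ρ1 + ρ2 - ρ3)) := by
  subst hρ1 hρ2 hρ3
  have hmem : ∀ v : Fin 4, (Ideal.Quotient.mk I) (X v ^ 2 - X v : MvPolynomial (Fin 4) ℝ) = 0 := by
    intro v
    rw [Ideal.Quotient.eq_zero_iff_mem, hI]
    exact Ideal.subset_span ⟨v, rfl⟩
  set φ := Ideal.Quotient.mk I with hφ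
  set a := φ (X 0) with ha'
  set b := φ (X 1) with hb'
  set c := φ (X 2) with hc'
  set d := φ (X 3) with hd'
  set A := φ (C α) with hA'
  set B := φ (C β) with hB'
  have ha : a ^ 2 = a := by
    have := hmem 0; rw [map_sub, map_pow, sub_eq_zero] at this; exact this
  have hb : b ^ 2 = b := by
    have := hmem 1; rw [map_sub, map_pow, sub_eq_zero] at this; exact this
  have hc : c ^ 2 = c := by
    have := hmem 2; rw [map_sub, map_pow, sub_eq_zero] at this; exact this
  have hd : d ^ 2 = d := by
    have := hmem 3; rw [map_sub, map_pow, sub_eq_zero] at this; exact this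
  have hs : Real.sqrt 2 ^ 2 = 2 := Real.sq_sqrt (by norm_num)
  have hab : A + B = 1 := by
    have h1 : α + β = 1 := by rw [hα, hβ]; ring
    have : φ (C α + C β) = φ (C 1) := by rw [← C_add, h1]
    simpa [map_add, map_one] using this
  have hBq : B ^ 2 + 4 * B + 2 = 0 := by
    have h1 : β ^ 2 + 4 * β + 2 = 0 := by rw [hβ]; linear_combination hs
    have h2 : φ (C (β ^ 2 + 4 * β + 2)) = 0 := by rw [h1, map_zero, map_zero]
    simp only [map_add, map_mul, map_pow, map_ofNat] at h2
    rw [← hB'] at h2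
    exact h2
  have hCα2 : φ (C (α ^ 2 + 1)) = A ^ 2 + 1 := by
    rw [C_add, C_pow, C_1, map_add, map_pow, map_one]
  simp only [map_add, map_mul, map_sub, map_pow, map_neg, map_one, hCα2,
    ← ha', ← hb', ← hc', ← hd', ← hA', ← hB']
  linear_combination
    (A^2 + 2*c*A*B + c^2*B^2 + 2*b*A*B + 2*b*c*B^2 + b^2*B^2) * ha +
    (A^2 + 2*c*A*B + c^2*B^2 + a*B^2 + 2*a*A*B + 2*a*c*B^2) * hb +
    (A^2 + b*B^2 + 2*b*A*B + a*B^2 + 2*a*A*B + 2*a*b*B^2) * hc +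
    hd +
    (b*c + b*c*B + b*c*A + a*c + a*c*B + a*c*A + a*b + a*b*B + a*b*A +
      a*b*c + 5*a*b*c*B + a*b*c*A) * hab +
    (a*b*c) * hBq
end

section
/- The $3 \times 3$ real matrix $F$ with rows $(6, -4, 59/40)$, $(-4, 3, -5/4)$, $(59/40, -5/4, 3/5)$ is positive semidefinite and satisfies the four equations: $F_{11} + 1 = 2F_{11} + 2F_{21} + F_{22}$; $-(F_{11}+1) = 6F_{21} + 6F_{22} + 4F_{31} + 6F_{32} + F_{33}$; $F_{11}+1 = 6F_{22} + 8F_{31} + 24F_{32} + 12F_{33}$; $-(F_{11}+1) = 20F_{32} + 30F_{33}$. -/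
theorem gram_matrix_psd_and_equations
    (F : Matrix (Fin 3) (Fin 3) ℝ)
    (hF : F = !![6, -4, 59/40; -4, 3, -5/4; 59/40, -5/4, 3/5]) :
    F.PosSemidef ∧
      F 0 0 + 1 = 2 * F 0 0 + 2 * F 1 0 + F 1 1 ∧
      -(F 0 0 + 1) = 6 * F 1 0 + 6 * F 1 1 + 4 * F 2 0 + 6 * F 2 1 + F 2 2 ∧
      F 0 0 + 1 = 6 * F 1 1 + 8 * F 2 0 + 24 * F 2 1 + 12 * F 2 2 ∧
      -(F 0 0 + 1) = 20 * F 2 1 + 30 * F 2 2 := by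
  subst hF
  refine ⟨Matrix.posSemidef_iff_dotProduct_mulVec.mpr ⟨?_, ?_⟩, by norm_num, by norm_num [Matrix.cons_val_two], by norm_num [Matrix.cons_val_two], by norm_num [Matrix.cons_val_two]⟩
  · ext i j
    fin_cases i <;> fin_cases j <;>
      simp [Matrix.conjTranspose_apply]
  · intro x
    have h := x
    simp only [dotProduct, Matrix.mulVec, dotProduct, Fin.sum_univ_three,
      Matrix.cons_val_zero, Matrix.cons_val_one, Matrix.head_cons, Matrix.cons_val_fin_one,
      Matrix.cons_val', Matrix.empty_val', Matrix.head_fin_const, RCLike.star_def, conj_trivial,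
      Matrix.cons_val_two, Matrix.tail_cons, Matrix.of_apply, Matrix.vecHead, Matrix.vecTail, Function.comp, Matrix.cons_val_succ, star_trivial]
    nlinarith [sq_nonneg (240*x 0 - 160*x 1 + 59*x 2), sq_nonneg (5*x 1 - 4*x 2), sq_nonneg (x 2)]
end

section
/- For every even integer $d \ge 4$: any real solution $(F_{i,j})_{1 \le i \le j \le d/2}$ (extended by $F_{0,j} = -F_{1,j}$) of the system of equations $(-1)^k(F_{1,1}+1) = \sum_{i=\lceil k/2 \rceil}^{\min\{k, d/2\}} F_{i,i}\binom{i}{k-i}\binom{k}{i} + 2\sum_{j=\lceil (k+1)/2 \rceil}^{\min\{k, d/2\}} \sum_{i=k-j}^{j-1} F_{i,j}\binom{i}{k-j}\binom{k}{i}$ for all $2 \le k \le d$ satisfies $F_{1,1} = d - 1$. -/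
open Finset

noncomputable def cc (k : ℕ) : ℝ := (-1 : ℝ) ^ k / (k * ((k : ℝ) - 1))

lemma altsum (i : ℕ) : ∀ m j : ℕ, m < i →
    ∑ t ∈ range (i + 1), ((-1 : ℝ)) ^ t * (i.choose t) * ((j + t).choose m) = 0 := by
  induction i with
  | zero => intro m j hm; omega
  | succ i ih =>
    intro m j hm
    set P : ℕ → ℝ := fun t => (((j + t).choose m : ℕ) : ℝ) with hP
    set f : ℕ → ℝ := fun t => ((-1 : ℝ)) ^ t * ((i+1).choose t) * P t with hf
    set g : ℕ → ℝ := fun t => ((-1 : ℝ)) ^ t * (i.choose t) * P t with hg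
    set B : ℕ → ℝ := fun t => ((-1 : ℝ)) ^ t * (i.choose t) * P (t+1) with hB
    have h1 : ∑ t ∈ range (i + 2), f t = ∑ t ∈ range (i + 1), f (t+1) + f 0 :=
      Finset.sum_range_succ' f (i+1)
    have h2 : ∀ t ∈ range (i+1), f (t+1) = -B t + g (t+1) := by
      intro t _
      simp only [hf, hg, hB, hP]
      rw [Nat.choose_succ_succ]
      push_cast
      ring
    have h3 : ∑ t ∈ range (i + 1), g (t+1) = ∑ t ∈ range (i + 1), g t - g 0 := by
      have a1 := Finset.sum_range_succ' g (i+1)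
      have a2 := Finset.sum_range_succ g (i+1)
      have a3 : g (i+1) = 0 := by simp [hg, Nat.choose_succ_self]
      rw [a3] at a2
      linarith [a1, a2]
    have h4 : g 0 = f 0 := by simp [hg, hf]
    have key : ∑ t ∈ range (i + 2), f t
        = ∑ t ∈ range (i + 1), (g t - B t) := by
      rw [h1, Finset.sum_congr rfl h2, Finset.sum_add_distrib, h3, Finset.sum_sub_distrib]
      simp only [Finset.sum_neg_distrib]
      rw [h4]
      ring
    show ∑ t ∈ range (i + 2), f t = 0
    rw [key]
    rcases m with _ | m'
    · apply Finset.sum_eq_zero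
      intro t _
      simp [hg, hB, hP]
    · have e3 : ∀ t ∈ range (i+1), g t - B t
          = -(((-1 : ℝ)) ^ t * (i.choose t) * ((j + t).choose m')) := by
        intro t _
        simp only [hg, hB, hP]
        have : (j + (t+1)).choose (m'+1) = (j+t).choose m' + (j+t).choose (m'+1) := by
          rw [show j + (t+1) = (j+t) + 1 by ring, Nat.choose_succ_succ]
        rw [this]
        push_cast
        ring
      rw [Finset.sum_congr rfl e3, Finset.sum_neg_distrib, ih m' j (by omega)]
      simp

lemma choose_ratio (k i : ℕ) (hk : 2 ≤ k) (hi : 2 ≤ i) :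
    k.choose i * (i * (i-1)) = (k-2).choose (i-2) * (k * (k-1)) := by
  obtain ⟨k', rfl⟩ : ∃ k', k = k' + 2 := ⟨k - 2, by omega⟩
  obtain ⟨i', rfl⟩ : ∃ i', i = i' + 2 := ⟨i - 2, by omega⟩
  simp only [Nat.add_sub_cancel, show i'+2-1 = i'+1 from rfl, show k'+2-1 = k'+1 from rfl]
  have h1 := Nat.add_one_mul_choose_eq (k'+1) (i'+1)
  have h2 := Nat.add_one_mul_choose_eq k' i'
  calc (k'+2).choose (i'+2) * ((i'+2) * (i'+1))
      = ((k'+2).choose (i'+2) * (i'+2)) * (i'+1) := by ring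
    _ = ((k'+2) * (k'+1).choose (i'+1)) * (i'+1) := by rw [← h1]
    _ = (k'+2) * ((k'+1).choose (i'+1) * (i'+1)) := by ring
    _ = (k'+2) * ((k'+1) * k'.choose i') := by rw [← h2]
    _ = k'.choose i' * ((k'+2) * (k'+1)) := by ring

lemma keyzero (i j : ℕ) (hi : 2 ≤ i) (hij : i ≤ j) :
    ∑ k ∈ Icc j (i + j), cc k * ((i.choose (k - j) * k.choose i : ℕ) : ℝ) = 0 := by
  have hstep : ∀ k ∈ Icc j (i + j),
      cc k * ((i.choose (k - j) * k.choose i : ℕ) : ℝ)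
      = (1 / ((i:ℝ) * ((i:ℝ) - 1))) *
          ((-1 : ℝ) ^ k * (i.choose (k - j)) * ((k-2).choose (i-2))) := by
    intro k hk
    simp only [mem_Icc] at hk
    have hk2 : 2 ≤ k := le_trans (le_trans hi hij) hk.1
    have hratio := choose_ratio k i hk2 hi
    have hkR : ((k:ℝ) * ((k:ℝ) - 1)) ≠ 0 := by
      have : (2:ℝ) ≤ (k:ℝ) := by exact_mod_cast hk2
      nlinarith
    have hiR : ((i:ℝ) * ((i:ℝ) - 1)) ≠ 0 := by
      have : (2:ℝ) ≤ (i:ℝ) := by exact_mod_cast hi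
      nlinarith
    have hratioR : (k.choose i : ℝ) * ((i:ℝ) * ((i:ℝ) - 1))
        = ((k-2).choose (i-2) : ℝ) * ((k:ℝ) * ((k:ℝ) - 1)) := by
      have e1 : ((i:ℝ) - 1) = ((i - 1 : ℕ) : ℝ) := by
        have : 1 ≤ i := by omega
        push_cast [this]; ring
      have e2 : ((k:ℝ) - 1) = ((k - 1 : ℕ) : ℝ) := by
        have : 1 ≤ k := by omega
        push_cast [this]; ring
      rw [e1, e2]
      exact_mod_cast hratio
    simp only [cc]
    push_cast
    rw [div_mul_eq_mul_div, div_mul_eq_mul_div, div_eq_div_iff hkR hiR]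
    linear_combination ((-1:ℝ)^k * (i.choose (k-j) : ℝ)) * hratioR
  rw [Finset.sum_congr rfl hstep, ← Finset.mul_sum]
  have hreindex : ∑ k ∈ Icc j (i + j),
      ((-1 : ℝ) ^ k * (i.choose (k - j)) * ((k-2).choose (i-2)))
      = ∑ t ∈ range (i + 1),
      ((-1 : ℝ) ^ (j + t) * (i.choose t) * (((j-2) + t).choose (i-2))) := by
    rw [show Icc j (i+j) = Ico j (i+j+1) by rw [Finset.Ico_add_one_right_eq_Icc]]
    rw [Finset.sum_Ico_eq_sum_range]
    apply Finset.sum_congr (by congr 1; omega)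
    intro t ht
    simp only [mem_range] at ht
    rw [show j + t - j = t by omega, show j + t - 2 = (j-2)+t by omega]
  rw [hreindex]
  have : ∑ t ∈ range (i + 1),
      ((-1 : ℝ) ^ (j + t) * (i.choose t) * (((j-2) + t).choose (i-2)))
      = (-1:ℝ)^j * ∑ t ∈ range (i + 1),
      ((-1 : ℝ) ^ t * (i.choose t) * (((j-2) + t).choose (i-2))) := by
    rw [Finset.mul_sum]
    apply Finset.sum_congr rfl
    intro t _
    rw [pow_add]; ring
  rw [this, altsum i (i-2) (j-2) (by omega)]
  ring

lemma telescope : ∀ n : ℕ, 1 ≤ n →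
    ∑ k ∈ Icc 2 n, (1:ℝ) / (k * ((k:ℝ) - 1)) = 1 - 1/(n:ℝ) := by
  intro n
  induction n with
  | zero => omega
  | succ n ih =>
    intro _
    rcases Nat.eq_or_lt_of_le (show 1 ≤ n + 1 by omega) with h | h
    · rw [← h]; norm_num
    · have hn : 1 ≤ n := by omega
      rw [Finset.sum_Icc_succ_top (by omega), ih hn]
      have h0 : (n:ℝ) ≠ 0 := Nat.cast_ne_zero.mpr (by omega)
      have h1 : ((n:ℝ) + 1) ≠ 0 := by positivity
      push_cast
      rw [add_sub_cancel_right]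
      field_simp
      ring


lemma B1 (d : ℕ) (hd : 4 ≤ d) (hdeven : Even d) (F : ℕ → ℕ → ℝ) :
    ∑ k ∈ Icc 2 d, cc k * (∑ i ∈ Icc ((k+1)/2) (min k (d/2)),
        F i i * ((i.choose (k-i) * k.choose i : ℕ):ℝ)) = F 1 1 := by
  have hd2 : d / 2 * 2 = d := Nat.div_mul_cancel hdeven.two_dvd
  have ext1 : ∀ k ∈ Icc 2 d, cc k * (∑ i ∈ Icc ((k+1)/2) (min k (d/2)),
        F i i * ((i.choose (k-i) * k.choose i : ℕ):ℝ))
      = ∑ i ∈ Icc 1 (d/2), F i i * (cc k * ((i.choose (k-i) * k.choose i : ℕ):ℝ)) := by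
    intro k hk
    rw [mem_Icc] at hk
    rw [Finset.mul_sum]
    have hsub : Icc ((k+1)/2) (min k (d/2)) ⊆ Icc 1 (d/2) := by
      intro i hi; simp only [mem_Icc, le_min_iff] at hi ⊢; omega
    have hzero : ∀ i ∈ Icc 1 (d/2), i ∉ Icc ((k+1)/2) (min k (d/2)) →
        cc k * (F i i * ((i.choose (k-i) * k.choose i : ℕ):ℝ)) = 0 := by
      intro i hi hni
      rw [mem_Icc] at hi
      simp only [mem_Icc, not_and, not_le, min_lt_iff] at hni
      have : i.choose (k-i) * k.choose i = 0 := by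
        rcases Nat.lt_or_ge i ((k+1)/2) with h | h
        · have : i < k - i := by omega
          rw [Nat.choose_eq_zero_of_lt this, zero_mul]
        · have : k < i := by rcases hni h with h' | h' <;> omega
          rw [Nat.choose_eq_zero_of_lt this, mul_zero]
      rw [this]
      simp
    rw [Finset.sum_subset hsub hzero]
    apply Finset.sum_congr rfl; intro i _; ring
  rw [Finset.sum_congr rfl ext1, Finset.sum_comm]
  rw [Finset.sum_eq_single_of_mem 1 (by rw [mem_Icc]; omega)]
  · rw [← Finset.mul_sum]
    rw [Finset.sum_eq_single_of_mem 2 (by rw [mem_Icc]; omega)]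
    · norm_num [cc]
    · intro k hk hk2
      rw [mem_Icc] at hk
      have : Nat.choose 1 (k-1) = 0 := Nat.choose_eq_zero_of_lt (by omega)
      rw [this]
      simp
  · intro i hi hi1
    rw [mem_Icc] at hi
    have hi2 : 2 ≤ i := by omega
    have hsum : ∑ k ∈ Icc 2 d, cc k * ((i.choose (k-i) * k.choose i : ℕ):ℝ) = 0 := by
      have hsub2 : Icc i (i+i) ⊆ Icc 2 d := by
        intro k hk; rw [mem_Icc] at *; omega
      have hzero2 : ∀ k ∈ Icc 2 d, k ∉ Icc i (i+i) →
          cc k * ((i.choose (k-i) * k.choose i : ℕ):ℝ) = 0 := by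
        intro k hk hnk
        rw [mem_Icc] at hk; simp only [mem_Icc, not_and, not_le] at hnk
        have : i.choose (k-i) * k.choose i = 0 := by
          rcases Nat.lt_or_ge k i with h | h
          · rw [Nat.choose_eq_zero_of_lt h, mul_zero]
          · have : i < k - i := by have := hnk h; omega
            rw [Nat.choose_eq_zero_of_lt this, zero_mul]
        rw [this]
        simp
      rw [← Finset.sum_subset hsub2 hzero2]
      exact keyzero i i hi2 le_rfl
    calc ∑ k ∈ Icc 2 d, F i i * (cc k * ((i.choose (k-i) * k.choose i : ℕ):ℝ))
        = F i i * ∑ k ∈ Icc 2 d, cc k * ((i.choose (k-i) * k.choose i : ℕ):ℝ) := by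
          rw [Finset.mul_sum]
      _ = 0 := by rw [hsum, mul_zero]

lemma B2 (d : ℕ) (hd : 4 ≤ d) (hdeven : Even d) (F : ℕ → ℕ → ℝ)
    (hF0 : ∀ j, F 0 j = -(F 1 j)) :
    ∑ k ∈ Icc 2 d, cc k * (2 * ∑ j ∈ Icc ((k+2)/2) (min k (d/2)),
        ∑ i ∈ Icc (k-j) (j-1), F i j * ((i.choose (k-j) * k.choose i : ℕ):ℝ)) = 0 := by
  have hd2 : d / 2 * 2 = d := Nat.div_mul_cancel hdeven.two_dvd
  have ext1 : ∀ k ∈ Icc 2 d, cc k * (2 * ∑ j ∈ Icc ((k+2)/2) (min k (d/2)),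
        ∑ i ∈ Icc (k-j) (j-1), F i j * ((i.choose (k-j) * k.choose i : ℕ):ℝ))
      = ∑ j ∈ Icc 1 (d/2), (if k ∈ Icc j (2*j-1) then
          cc k * 2 * ∑ i ∈ Icc (k-j) (j-1), F i j * ((i.choose (k-j) * k.choose i : ℕ):ℝ)
        else 0) := by
    intro k hk
    rw [mem_Icc] at hk
    have step1 : ∀ j ∈ Icc 1 (d/2), (if k ∈ Icc j (2*j-1) then
          cc k * 2 * ∑ i ∈ Icc (k-j) (j-1), F i j * ((i.choose (k-j) * k.choose i : ℕ):ℝ)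
        else 0)
        = (if j ∈ Icc ((k+2)/2) (min k (d/2)) then
          cc k * 2 * ∑ i ∈ Icc (k-j) (j-1), F i j * ((i.choose (k-j) * k.choose i : ℕ):ℝ)
        else 0) := by
      intro j hj
      rw [mem_Icc] at hj
      apply if_congr _ rfl rfl
      simp only [mem_Icc, le_min_iff]
      omega
    rw [Finset.sum_congr rfl step1, Finset.sum_ite_mem]
    have hinter : Icc 1 (d/2) ∩ Icc ((k+2)/2) (min k (d/2)) = Icc ((k+2)/2) (min k (d/2)) := by
      apply Finset.inter_eq_right.mpr
      intro j hj
      simp only [mem_Icc, le_min_iff] at hj ⊢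
      omega
    rw [hinter, Finset.mul_sum, Finset.mul_sum]
    apply Finset.sum_congr rfl
    intro j _
    ring
  rw [Finset.sum_congr rfl ext1, Finset.sum_comm]
  apply Finset.sum_eq_zero
  intro j hj
  rw [mem_Icc] at hj
  have step2 : ∑ k ∈ Icc 2 d, (if k ∈ Icc j (2*j-1) then
        cc k * 2 * ∑ i ∈ Icc (k-j) (j-1), F i j * ((i.choose (k-j) * k.choose i : ℕ):ℝ)
      else 0)
      = ∑ k ∈ Icc 2 d ∩ Icc j (2*j-1),
        cc k * 2 * ∑ i ∈ Icc (k-j) (j-1), F i j * ((i.choose (k-j) * k.choose i : ℕ):ℝ) :=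
    Finset.sum_ite_mem _ _ _
  rw [step2]
  rcases Nat.lt_or_ge j 2 with hj1 | hj2
  · have : j = 1 := by omega
    subst this
    have : Icc 2 d ∩ Icc 1 (2*1-1) = ∅ := by
      ext a; simp only [mem_inter, mem_Icc, notMem_empty, iff_false, not_and]; omega
    rw [this]
    simp
  · have hIc : Icc 2 d ∩ Icc j (2*j-1) = Icc j (2*j-1) := by
      ext a; simp only [mem_inter, mem_Icc]; omega
    rw [hIc]
    -- extend inner sum over i
    have ext2 : ∀ k ∈ Icc j (2*j-1),
        cc k * 2 * ∑ i ∈ Icc (k-j) (j-1), F i j * ((i.choose (k-j) * k.choose i : ℕ):ℝ)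
        = ∑ i ∈ Icc 0 (j-1), 2 * F i j * (cc k * ((i.choose (k-j) * k.choose i : ℕ):ℝ)) := by
      intro k hk
      rw [mem_Icc] at hk
      have hsub : Icc (k-j) (j-1) ⊆ Icc 0 (j-1) := by
        intro i hi; rw [mem_Icc] at *; omega
      have hzero : ∀ i ∈ Icc 0 (j-1), i ∉ Icc (k-j) (j-1) →
          F i j * ((i.choose (k-j) * k.choose i : ℕ):ℝ) = 0 := by
        intro i hi hni
        rw [mem_Icc] at hi
        simp only [mem_Icc, not_and, not_le] at hni
        have h1 : i < k - j := by
          rcases Nat.lt_or_ge i (k-j) with h | h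
          · exact h
          · exact absurd hi.2 (Nat.not_le.mpr (hni h))
        rw [Nat.choose_eq_zero_of_lt h1, zero_mul]
        simp
      rw [Finset.sum_subset hsub hzero, Finset.mul_sum]
      apply Finset.sum_congr rfl
      intro i _
      ring
    rw [Finset.sum_congr rfl ext2, Finset.sum_comm]
    -- now sum over i of 2 F i j * V i
    have pull : ∀ i ∈ Icc 0 (j-1),
        ∑ k ∈ Icc j (2*j-1), 2 * F i j * (cc k * ((i.choose (k-j) * k.choose i : ℕ):ℝ))
        = 2 * F i j * ∑ k ∈ Icc j (2*j-1), cc k * ((i.choose (k-j) * k.choose i : ℕ):ℝ) := by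
      intro i _
      rw [Finset.mul_sum]
    rw [Finset.sum_congr rfl pull]
    -- split off i = 0, 1
    have hsplit : Icc 0 (j-1) = insert 0 (insert 1 (Icc 2 (j-1))) := by
      ext a
      simp only [mem_Icc, mem_insert]
      omega
    rw [hsplit, Finset.sum_insert (by simp only [mem_insert, mem_Icc]; omega),
        Finset.sum_insert (by simp only [mem_Icc]; omega)]
    have tail : ∑ i ∈ Icc 2 (j-1),
        2 * F i j * ∑ k ∈ Icc j (2*j-1), cc k * ((i.choose (k-j) * k.choose i : ℕ):ℝ) = 0 := by
      apply Finset.sum_eq_zero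
      intro i hi
      rw [mem_Icc] at hi
      have hV : ∑ k ∈ Icc j (2*j-1), cc k * ((i.choose (k-j) * k.choose i : ℕ):ℝ) = 0 := by
        have hsub : Icc j (i+j) ⊆ Icc j (2*j-1) := by
          intro k hk; rw [mem_Icc] at *; omega
        have hzero : ∀ k ∈ Icc j (2*j-1), k ∉ Icc j (i+j) →
            cc k * ((i.choose (k-j) * k.choose i : ℕ):ℝ) = 0 := by
          intro k hk hnk
          rw [mem_Icc] at hk
          simp only [mem_Icc, not_and, not_le] at hnk
          have : i < k - j := by have := hnk hk.1; omega
          rw [Nat.choose_eq_zero_of_lt this, zero_mul]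
          simp
        rw [← Finset.sum_subset hsub hzero]
        exact keyzero i j hi.1 (by omega)
      rw [hV, mul_zero]
    rw [tail, add_zero]
    -- compute V 0 and V 1
    have hV0 : ∑ k ∈ Icc j (2*j-1), cc k * ((Nat.choose 0 (k-j) * k.choose 0 : ℕ):ℝ) = cc j := by
      rw [Finset.sum_eq_single_of_mem j (by rw [mem_Icc]; omega)]
      · simp
      · intro k hk hkj
        rw [mem_Icc] at hk
        rw [Nat.choose_eq_zero_of_lt (show 0 < k - j by omega), zero_mul]
        simp
    have hV1 : ∑ k ∈ Icc j (2*j-1), cc k * ((Nat.choose 1 (k-j) * k.choose 1 : ℕ):ℝ)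
        = cc j * j + cc (j+1) * (j+1) := by
      have hsub : Icc j (j+1) ⊆ Icc j (2*j-1) := by
        intro k hk; rw [mem_Icc] at *; omega
      have hzero : ∀ k ∈ Icc j (2*j-1), k ∉ Icc j (j+1) →
          cc k * ((Nat.choose 1 (k-j) * k.choose 1 : ℕ):ℝ) = 0 := by
        intro k hk hnk
        rw [mem_Icc] at hk
        simp only [mem_Icc, not_and, not_le] at hnk
        rw [Nat.choose_eq_zero_of_lt (show 1 < k - j by have := hnk hk.1; omega), zero_mul]
        simp
      rw [← Finset.sum_subset hsub hzero]
      rw [Finset.sum_Icc_succ_top (by omega), Finset.Icc_self, Finset.sum_singleton]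
      rw [Nat.sub_self, show j + 1 - j = 1 by omega]
      simp [Nat.choose_one_right]
    rw [hV0, hV1, hF0 j]
    have hccid : cc j * j + cc (j+1) * (j+1) = cc j := by
      have hj0 : (j:ℝ) ≠ 0 := Nat.cast_ne_zero.mpr (by omega)
      have hj1 : (j:ℝ) - 1 ≠ 0 := by
        have : (2:ℝ) ≤ (j:ℝ) := by exact_mod_cast hj2
        nlinarith
      have hjp : ((j:ℝ) + 1) ≠ 0 := by positivity
      simp only [cc]
      rw [pow_succ]
      push_cast
      rw [add_sub_cancel_right]
      field_simp
      ring
    rw [hccid]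
    ring

theorem F11_eq_d_sub_one (d : ℕ) (hd : 4 ≤ d) (hdeven : Even d)
    (F : ℕ → ℕ → ℝ) (hF0 : ∀ j, F 0 j = -(F 1 j))
    (hsys : ∀ k, 2 ≤ k → k ≤ d →
      (-1 : ℝ) ^ k * (F 1 1 + 1) =
        (∑ i ∈ Finset.Icc ((k + 1) / 2) (min k (d / 2)),
            F i i * ((i.choose (k - i) * k.choose i : ℕ) : ℝ)) +
          2 * ∑ j ∈ Finset.Icc ((k + 2) / 2) (min k (d / 2)),
            ∑ i ∈ Finset.Icc (k - j) (j - 1),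
              F i j * ((i.choose (k - j) * k.choose i : ℕ) : ℝ)) :
    F 1 1 = (d : ℝ) - 1 := by
  have main : ∑ k ∈ Icc 2 d, cc k * ((-1:ℝ)^k * (F 1 1 + 1))
      = ∑ k ∈ Icc 2 d, cc k * ((∑ i ∈ Icc ((k+1)/2) (min k (d/2)),
            F i i * ((i.choose (k-i) * k.choose i : ℕ):ℝ))
          + 2 * ∑ j ∈ Icc ((k+2)/2) (min k (d/2)),
            ∑ i ∈ Icc (k-j) (j-1), F i j * ((i.choose (k-j) * k.choose i : ℕ):ℝ)) := by
    apply Finset.sum_congr rfl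
    intro k hk
    rw [mem_Icc] at hk
    rw [← hsys k hk.1 hk.2]
  have lhs_eq : ∑ k ∈ Icc 2 d, cc k * ((-1:ℝ)^k * (F 1 1 + 1))
      = (F 1 1 + 1) * (1 - 1/(d:ℝ)) := by
    have e : ∀ k ∈ Icc 2 d, cc k * ((-1:ℝ)^k * (F 1 1 + 1))
        = (F 1 1 + 1) * ((1:ℝ)/(k * ((k:ℝ)-1))) := by
      intro k hk
      have hsq : (-1:ℝ)^k * (-1:ℝ)^k = 1 := by
        rw [← pow_add]; exact Even.neg_one_pow ⟨k, rfl⟩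
      calc cc k * ((-1:ℝ)^k * (F 1 1 + 1))
          = ((-1:ℝ)^k * (-1:ℝ)^k) * ((F 1 1 + 1) * ((1:ℝ)/(k * ((k:ℝ)-1)))) := by
            simp only [cc]; ring
        _ = (F 1 1 + 1) * ((1:ℝ)/(k * ((k:ℝ)-1))) := by rw [hsq, one_mul]
    rw [Finset.sum_congr rfl e, ← Finset.mul_sum, telescope d (by omega)]
  have rhs_eq : ∑ k ∈ Icc 2 d, cc k * ((∑ i ∈ Icc ((k+1)/2) (min k (d/2)),
            F i i * ((i.choose (k-i) * k.choose i : ℕ):ℝ))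
          + 2 * ∑ j ∈ Icc ((k+2)/2) (min k (d/2)),
            ∑ i ∈ Icc (k-j) (j-1), F i j * ((i.choose (k-j) * k.choose i : ℕ):ℝ))
      = F 1 1 := by
    have split : ∀ k ∈ Icc 2 d, cc k * ((∑ i ∈ Icc ((k+1)/2) (min k (d/2)),
            F i i * ((i.choose (k-i) * k.choose i : ℕ):ℝ))
          + 2 * ∑ j ∈ Icc ((k+2)/2) (min k (d/2)),
            ∑ i ∈ Icc (k-j) (j-1), F i j * ((i.choose (k-j) * k.choose i : ℕ):ℝ))
        = cc k * (∑ i ∈ Icc ((k+1)/2) (min k (d/2)),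
            F i i * ((i.choose (k-i) * k.choose i : ℕ):ℝ))
          + cc k * (2 * ∑ j ∈ Icc ((k+2)/2) (min k (d/2)),
            ∑ i ∈ Icc (k-j) (j-1), F i j * ((i.choose (k-j) * k.choose i : ℕ):ℝ)) := by
      intro k _
      ring
    rw [Finset.sum_congr rfl split, Finset.sum_add_distrib,
        B1 d hd hdeven F, B2 d hd hdeven F hF0, add_zero]
  have combined : (F 1 1 + 1) * (1 - 1/(d:ℝ)) = F 1 1 := by
    rw [← lhs_eq, main, rhs_eq]
  have hdR : (d:ℝ) ≠ 0 := Nat.cast_ne_zero.mpr (by omega)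
  field_simp at combined
  linear_combination (-1 : ℝ) * combined
end

section
/- For all even integers $d \ge 4$: if $(F_{i,j})$ solves the SOS-linear system (with $F_{1,1} = d-1$), then $F_{d/2, d/2} = d / \binom{d}{d/2}$ and $F_{d/2 - 1, d/2} = -(1 + d/4) \cdot d/\binom{d}{d/2}$. -/
theorem F_corner_entries (d : ℕ) (hd : 4 ≤ d) (hdeven : Even d)
    (F : ℕ → ℕ → ℝ) (hF0 : ∀ j, F 0 j = -(F 1 j))
    (hsys : ∀ k, 2 ≤ k → k ≤ d →
      (-1 : ℝ) ^ k * (F 1 1 + 1) =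
        (∑ i ∈ Finset.Icc ((k + 1) / 2) (min k (d / 2)),
            F i i * ((i.choose (k - i) * k.choose i : ℕ) : ℝ)) +
          2 * ∑ j ∈ Finset.Icc ((k + 2) / 2) (min k (d / 2)),
            ∑ i ∈ Finset.Icc (k - j) (j - 1),
              F i j * ((i.choose (k - j) * k.choose i : ℕ) : ℝ))
    (hF11 : F 1 1 = (d : ℝ) - 1) :
    F (d / 2) (d / 2) = (d : ℝ) / (d.choose (d / 2)) ∧
      F (d / 2 - 1) (d / 2) = -(1 + (d : ℝ) / 4) * ((d : ℝ) / (d.choose (d / 2))) := by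
  obtain ⟨m, hm⟩ := hdeven
  have hm2 : 2 ≤ m := by omega
  have hd2 : d / 2 = m := by omega
  have hdm : d = 2 * m := by omega
  subst hdm
  -- equation at k = d
  have h1 := hsys (2 * m) (by omega) le_rfl
  have h2 := hsys (2 * m - 1) (by omega) (by omega)
  rw [hF11] at h1 h2
  have e1 : (2 * m + 1) / 2 = m := by omega
  have e2 : min (2 * m) (2 * m / 2) = m := by omega
  have e3 : (2 * m + 2) / 2 = m + 1 := by omega
  have e4 : (2 * m - 1 + 1) / 2 = m := by omega
  have e5 : min (2 * m - 1) (2 * m / 2) = m := by omega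
  have e6 : (2 * m - 1 + 2) / 2 = m := by omega
  rw [e1, e2, e3, Finset.Icc_self, Finset.Icc_eq_empty (by omega),
    Finset.sum_singleton, Finset.sum_empty] at h1
  rw [e4, e5, e6, Finset.Icc_self] at h2
  simp only [Finset.sum_singleton] at h2
  have e7 : 2 * m - 1 - m = m - 1 := by omega
  rw [e7, Finset.Icc_self] at h2
  simp only [Finset.sum_singleton] at h2
  -- clean up choose values
  have c1 : Nat.choose m (2 * m - m) = 1 := by
    have h : 2 * m - m = m := by omega
    rw [h, Nat.choose_self]
  have c2 : Nat.choose m (m - 1) = m := by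
    rw [← Nat.choose_symm (Nat.sub_le m 1)]
    have h : m - (m - 1) = 1 := by omega
    rw [h, Nat.choose_one_right]
  have c3 : Nat.choose (m - 1) (m - 1) = 1 := Nat.choose_self _
  have c4 : Nat.choose (2 * m - 1) (m - 1) = Nat.choose (2 * m - 1) m := by
    rw [← Nat.choose_symm (by omega : m ≤ 2 * m - 1)]
    congr 1
    omega
  have c5 : Nat.choose (2 * m) m = 2 * Nat.choose (2 * m - 1) m := by
    have hpascal : Nat.choose (2 * m) m =
        Nat.choose (2 * m - 1) (m - 1) + Nat.choose (2 * m - 1) m := by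
      have h := Nat.choose_succ_succ (2 * m - 1) (m - 1)
      simp only [Nat.succ_eq_add_one] at h
      have e : 2 * m - 1 + 1 = 2 * m := by omega
      have e' : m - 1 + 1 = m := by omega
      rw [e, e'] at h
      exact h
    omega
  rw [c1, c5] at h1
  rw [c2, c3, c4] at h2
  set A : ℕ := Nat.choose (2 * m - 1) m with hA
  have hApos : 0 < A := Nat.choose_pos (by omega)
  have hAR : (0:ℝ) < A := by exact_mod_cast hApos
  rw [hd2, c5]
  have hsign1 : (-1 : ℝ) ^ (2 * m) = 1 := by
    rw [pow_mul]; norm_num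
  have hsign2 : (-1 : ℝ) ^ (2 * m - 1) = -1 := by
    have h : 2 * m - 1 = 2 * (m - 1) + 1 := by omega
    rw [h, pow_succ, pow_mul]; norm_num
  rw [hsign1] at h1
  rw [hsign2] at h2
  push_cast at h1 h2 ⊢
  have hFmm : F m m = 2 * (m:ℝ) / (2 * A) := by
    field_simp
    nlinarith [h1, hAR]
  refine ⟨hFmm, ?_⟩
  rw [hFmm] at h2
  field_simp at h2 ⊢
  nlinarith [h2, hAR]
end
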